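/- In the Brauer algebra B_n(ω), the symmetrizer S_n = (1/n!) ∏_{1 ≤ i < j ≤ n} ρ_{ij}(i - j), with ρ_{ij}(u) = 1 - s_{ij}/u + ε_{ij}/(u - ω/2 + 1) and the product taken in lexicographic order on (i,j), satisfies ε_k S_n = 0 and s_k S_n = S_n for all k = 1,...,n-1. -/

import Mathlib

open scoped BigOperators

/-- The defining relations of the Brauer algebra `B_n(ω)`, expressed in terms of the
transposition elements `s i j` and contraction elements `ε i j`. -/
structure BrauerRels (K : Type*) [Field K] (A : Type*) [Ring A] [Algebra K A]
    (ω : K) (s ε : ℕ → ℕ → A) : Prop where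
  s_symm : ∀ i j, s i j = s j i
  e_symm : ∀ i j, ε i j = ε j i
  s_sq : ∀ i j, i ≠ j → s i j * s i j = 1
  e_sq : ∀ i j, i ≠ j → ε i j * ε i j = ω • ε i j
  se : ∀ i j, i ≠ j → s i j * ε i j = ε i j
  es : ∀ i j, i ≠ j → ε i j * s i j = ε i j
  conj_s : ∀ i j k, i ≠ j → j ≠ k → i ≠ k → s i j * s j k * s i j = s i k
  conj_e : ∀ i j k, i ≠ j → j ≠ k → i ≠ k → s i j * ε j k * s i j = ε i k
  eee : ∀ i j k, i ≠ j → j ≠ k → i ≠ k → ε i j * ε j k * ε i j = ε i j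
  ese : ∀ i j k, i ≠ j → j ≠ k → i ≠ k → ε i j * s j k * ε i j = ε i j
  ee_es : ∀ i j k, i ≠ j → j ≠ k → i ≠ k → ε i j * ε j k = ε i j * s i k
  ee_es' : ∀ i j k, i ≠ j → j ≠ k → i ≠ k → ε j k * ε i j = ε j k * s i k
  ss_comm : ∀ i j k l, i ≠ k → i ≠ l → j ≠ k → j ≠ l →
    s i j * s k l = s k l * s i j
  se_comm : ∀ i j k l, i ≠ k → i ≠ l → j ≠ k → j ≠ l →
    s i j * ε k l = ε k l * s i j
  ee_comm : ∀ i j k l, i ≠ k → i ≠ l → j ≠ k → j ≠ l →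
    ε i j * ε k l = ε k l * ε i j

/-- `ρ_{ij}(u) = 1 - s_{ij}/u + ε_{ij}/(u - κ)`. -/
noncomputable def brauerRho {K : Type*} [Field K] {A : Type*} [Ring A] [Algebra K A]
    (κ : K) (s ε : ℕ → ℕ → A) (i j : ℕ) (u : K) : A :=
  1 - u⁻¹ • s i j + (u - κ)⁻¹ • ε i j

/-- The list of pairs `(i, j)` with `0 ≤ i < j < n`, in lexicographic order. -/
def lexPairs (n : ℕ) : List (ℕ × ℕ) :=
  (List.range n).flatMap fun i => ((List.range n).filter fun j => i < j).map fun j => (i, j)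

/-- The symmetrizer `S_n = (1/n!) ∏_{i<j} ρ_{ij}(i-j)` of the Brauer algebra (product in
lexicographic order on the pairs `(i,j)`, strands labelled `0, …, n-1`). -/
noncomputable def brauerSymmetrizer {K : Type*} [Field K] {A : Type*} [Ring A] [Algebra K A]
    (ω : K) (s ε : ℕ → ℕ → A) (n : ℕ) : A :=
  ((Nat.factorial n : K))⁻¹ •
    (((lexPairs n).map fun p =>
      brauerRho (ω / 2 - 1) s ε p.1 p.2 ((p.1 : K) - (p.2 : K))).prod)

/-!
The factors `ρ_{ij}(u)` and `ρ_{kl}(v)` commute when `{i, j}` and `{k, l}` are disjoint, and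
they satisfy the Yang–Baxter equation
`ρ_{ij}(u) ρ_{ik}(u + v) ρ_{jk}(v) = ρ_{jk}(v) ρ_{ik}(u + v) ρ_{ij}(u)`, which after clearing
denominators is a polynomial identity in the Brauer algebra on three strands. Row `k` of the
lexicographic product starts with `ρ_{k,k+1}(-1)`, and in every earlier row `m` the adjacent
factors `ρ_{mk}(m - k) ρ_{m,k+1}(m - k - 1)` let it pass to the left by Yang–Baxter. So
`S_n = ρ_{k,k+1}(-1) X`, and the claims follow from `ε_k ρ_{k,k+1}(-1) = 0` (this is where
`ω = 2κ + 2` for `κ = ω/2 - 1` enters) and `s_k ρ_{k,k+1}(-1) = ρ_{k,k+1}(-1)`.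
-/

theorem mul_mul_of_mul_eq {M : Type*} [Semigroup M] {a b c : M} (h : a * b = c) (x : M) :
    a * (b * x) = c * x := by
  rw [← mul_assoc, h]

theorem mul_mul_mul_eq_of_yangBaxter {M : Type*} [Monoid M] {P a b Q r : M}
    (hybe : a * b * r = r * b * a) (hP : Commute r P) (hQ : Commute r Q) :
    P * (a * (b * Q)) * r = r * (P * (b * (a * Q))) :=
  calc P * (a * (b * Q)) * r = P * (a * b * (Q * r)) := by simp only [mul_assoc]
    _ = P * (a * b * r * Q) := by rw [← hQ.eq]; simp only [mul_assoc]
    _ = P * r * (b * (a * Q)) := by rw [hybe]; simp only [mul_assoc]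
    _ = r * (P * (b * (a * Q))) := by rw [← hP.eq, mul_assoc]

theorem List.filter_lt_range (i : ℕ) :
    ∀ n : ℕ, (List.range n).filter (i < ·) = List.range' (i + 1) (n - (i + 1))
  | 0 => by simp
  | n + 1 => by
    rw [List.range_succ, List.filter_append, List.filter_lt_range i n]
    by_cases h : i < n
    · rw [show n + 1 - (i + 1) = n - (i + 1) + 1 by omega, List.range'_1_concat,
        show i + 1 + (n - (i + 1)) = n by omega]
      simp [h]
    · rw [show n + 1 - (i + 1) = n - (i + 1) by omega]
      simp [h]

theorem List.range'_eq_append_cons_cons {a k n : ℕ} (hak : a ≤ k) (hkn : k + 2 ≤ n) :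
    List.range' a (n - a) =
      List.range' a (k - a) ++ k :: (k + 1) :: List.range' (k + 2) (n - (k + 2)) := by
  rw [show n - a = k - a + (n - (k + 2) + 1 + 1) by omega, ← List.range'_append,
    List.range'_succ, List.range'_succ]
  simp only [one_mul, show a + (k - a) = k by omega]

section Brauer

variable {K : Type*} [Field K] {A : Type*} [Ring A] [Algebra K A]
variable {ω : K} {s ε : ℕ → ℕ → A}

noncomputable def brauerR (κ : K) (s ε : ℕ → ℕ → A) (i j : ℕ) (u : K) : A :=
  (u * (u - κ)) • 1 - (u - κ) • s i j + u • ε i j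

theorem brauerRho_eq_inv_smul_brauerR (κ : K) (i j : ℕ) {u : K} (hu : u ≠ 0)
    (hu' : u - κ ≠ 0) : brauerRho κ s ε i j u = (u * (u - κ))⁻¹ • brauerR κ s ε i j u := by
  rw [brauerRho, brauerR, smul_add, smul_sub, smul_smul, smul_smul, smul_smul,
    inv_mul_cancel₀ (mul_ne_zero hu hu'), one_smul, mul_inv, mul_assoc, inv_mul_cancel₀ hu',
    mul_one, mul_comm u⁻¹, mul_assoc, inv_mul_cancel₀ hu, mul_one]

namespace BrauerRels

theorem s_mul_e_of_ne (hB : BrauerRels K A ω s ε) {x y z : ℕ} (hxy : x ≠ y) (hyz : y ≠ z)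
    (hxz : x ≠ z) : s x y * ε y z = ε x z * s x y := by
  simpa only [mul_assoc, hB.s_sq x y hxy, mul_one] using
    congrArg (· * s x y) (hB.conj_e x y z hxy hyz hxz)

theorem s_mul_s_of_ne (hB : BrauerRels K A ω s ε) {x y z : ℕ} (hxy : x ≠ y) (hyz : y ≠ z)
    (hxz : x ≠ z) : s x y * s y z = s x z * s x y := by
  simpa only [mul_assoc, hB.s_sq x y hxy, mul_one] using
    congrArg (· * s x y) (hB.conj_s x y z hxy hyz hxz)

theorem commute_brauerRho_of_disjoint (hB : BrauerRels K A ω s ε) (κ : K) {i j k l : ℕ}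
    (hik : i ≠ k) (hil : i ≠ l) (hjk : j ≠ k) (hjl : j ≠ l) (u v : K) :
    Commute (brauerRho κ s ε i j u) (brauerRho κ s ε k l v) := by
  have css : Commute (s i j) (s k l) := hB.ss_comm i j k l hik hil hjk hjl
  have cse : Commute (s i j) (ε k l) := hB.se_comm i j k l hik hil hjk hjl
  have ces : Commute (ε i j) (s k l) :=
    (hB.se_comm k l i j hik.symm hjk.symm hil.symm hjl.symm).symm
  have cee : Commute (ε i j) (ε k l) := hB.ee_comm i j k l hik hil hjk hjl
  unfold brauerRho
  refine ((Commute.one_right _).sub_right (Commute.smul_right ?_ _)).add_right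
    (Commute.smul_right ?_ _)
  · exact ((Commute.one_left _).sub_left (css.smul_left _)).add_left (ces.smul_left _)
  · exact ((Commute.one_left _).sub_left (cse.smul_left _)).add_left (cee.smul_left _)

theorem s_mul_brauerRho_neg_one (hB : BrauerRels K A ω s ε) (κ : K) {k l : ℕ} (hkl : k ≠ l) :
    s k l * brauerRho κ s ε k l (-1) = brauerRho κ s ε k l (-1) := by
  rw [brauerRho, mul_add, mul_sub, mul_one, mul_smul_comm, mul_smul_comm,
    hB.s_sq k l hkl, hB.se k l hkl, inv_neg, inv_one]
  module

theorem e_mul_brauerRho_neg_one (hB : BrauerRels K A ω s ε) {κ : K} (hω : ω = 2 * κ + 2)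
    (hκ : -1 - κ ≠ 0) {k l : ℕ} (hkl : k ≠ l) :
    ε k l * brauerRho κ s ε k l (-1) = 0 := by
  have hc : (-1 - κ)⁻¹ * ω = -2 := by
    rw [hω, show 2 * κ + 2 = -2 * (-1 - κ) by ring, mul_left_comm, inv_mul_cancel₀ hκ, mul_one]
  rw [brauerRho, mul_add, mul_sub, mul_one, mul_smul_comm, mul_smul_comm,
    hB.es k l hkl, hB.e_sq k l hkl, smul_smul, hc, inv_neg, inv_one]
  module

section Triple

variable (hB : BrauerRels K A ω s ε) {i j k : ℕ} (hij : i ≠ j) (hjk : j ≠ k) (hik : i ≠ k)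
include hB hij hjk hik

theorem s_mul_e_triple :
    s i j * ε i k = ε j k * s i j ∧ s i j * ε j k = ε i k * s i j ∧
    s i k * ε i j = ε j k * s i k ∧ s i k * ε j k = ε i j * s i k ∧
    s j k * ε i j = ε i k * s j k ∧ s j k * ε i k = ε i j * s j k := by
  refine ⟨?_, hB.s_mul_e_of_ne hij hjk hik, ?_, ?_, ?_, ?_⟩
  · rw [hB.s_symm i j]; exact hB.s_mul_e_of_ne hij.symm hik hjk
  · rw [hB.s_symm i k, hB.e_symm j k]; exact hB.s_mul_e_of_ne hik.symm hij hjk.symm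
  · rw [hB.e_symm j k]; exact hB.s_mul_e_of_ne hik hjk.symm hij
  · rw [hB.s_symm j k, hB.e_symm i j, hB.e_symm i k]
    exact hB.s_mul_e_of_ne hjk.symm hij.symm hik.symm
  · rw [hB.e_symm i k, hB.e_symm i j]; exact hB.s_mul_e_of_ne hjk hik.symm hij.symm

theorem e_mul_e_triple :
    ε i j * ε i k = ε i j * s j k ∧ ε i j * ε j k = ε i j * s i k ∧
    ε i k * ε i j = ε i k * s j k ∧ ε i k * ε j k = ε i k * s i j ∧
    ε j k * ε i j = ε j k * s i k ∧ ε j k * ε i k = ε j k * s i j := by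
  refine ⟨?_, hB.ee_es i j k hij hjk hik, ?_, ?_, ?_, ?_⟩
  · rw [hB.e_symm i j]; exact hB.ee_es j i k hij.symm hik hjk
  · rw [hB.e_symm i k, hB.s_symm j k]; exact hB.ee_es k i j hik.symm hij hjk.symm
  · rw [hB.e_symm j k]; exact hB.ee_es i k j hik hjk.symm hij
  · rw [hB.e_symm j k, hB.e_symm i j, hB.s_symm i k]
    exact hB.ee_es k j i hjk.symm hij.symm hik.symm
  · rw [hB.e_symm i k, hB.s_symm i j]; exact hB.ee_es j k i hjk hik.symm hij.symm

theorem s_mul_s_triple :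
    s j k * s i j = s i k * s j k ∧ s i k * s j k = s i j * s i k ∧
    s i j * s j k = s i k * s i j ∧ s j k * s i k = s i j * s j k := by
  refine ⟨?_, ?_, hB.s_mul_s_of_ne hij hjk hik, ?_⟩
  · rw [hB.s_symm j k, hB.s_symm i j, hB.s_symm i k]
    exact hB.s_mul_s_of_ne hjk.symm hij.symm hik.symm
  · rw [hB.s_symm j k]; exact hB.s_mul_s_of_ne hik hjk.symm hij
  · rw [hB.s_symm i k, hB.s_symm i j]; exact hB.s_mul_s_of_ne hjk hik.symm hij.symm

/- Read left to right, the relations above rewrite every word in the generators of the strands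
`i, j, k` to a normal form, after which both sides are combinations of the same words with
polynomial coefficients. -/
theorem yangBaxter_brauerR {κ : K} (hω : ω = 2 * κ + 2) (u v : K) :
    brauerR κ s ε i j u * brauerR κ s ε i k (u + v) * brauerR κ s ε j k v =
      brauerR κ s ε j k v * brauerR κ s ε i k (u + v) * brauerR κ s ε i j u := by
  obtain ⟨se₁, se₂, se₃, se₄, se₅, se₆⟩ := hB.s_mul_e_triple hij hjk hik
  obtain ⟨ee₁, ee₂, ee₃, ee₄, ee₅, ee₆⟩ := hB.e_mul_e_triple hij hjk hik
  obtain ⟨ss₁, ss₂, ss₃, ss₄⟩ := hB.s_mul_s_triple hij hjk hik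
  have ess (x : A) : ε j k * (s i k * (s i j * x)) = ε j k * (s i k * x) := by
    rw [← mul_assoc (s i k), ← ss₃, ← ss₄, ← mul_assoc, ← mul_assoc, hB.es j k hjk, mul_assoc]
  have eij : ε i j * ε i j = (2 * κ + 2) • ε i j := hω ▸ hB.e_sq i j hij
  have ejk : ε j k * ε j k = (2 * κ + 2) • ε j k := hω ▸ hB.e_sq j k hjk
  -- a trailing `* 1` lets every relation be applied in the form `a * (b * x) = c * x`
  rw [← mul_one (_ * brauerR κ s ε j k v), ← mul_one (_ * brauerR κ s ε i j u)]
  simp only [brauerR, sub_mul, mul_sub, add_mul, mul_add, smul_mul_assoc, mul_smul_comm,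
    one_mul, mul_assoc]
  simp only [mul_mul_of_mul_eq (hB.s_sq i j hij), mul_mul_of_mul_eq (hB.s_sq j k hjk),
    mul_mul_of_mul_eq eij, mul_mul_of_mul_eq ejk, mul_mul_of_mul_eq (hB.es i j hij),
    mul_mul_of_mul_eq (hB.se i j hij), mul_mul_of_mul_eq (hB.se j k hjk),
    mul_mul_of_mul_eq se₁, mul_mul_of_mul_eq se₂, mul_mul_of_mul_eq se₃,
    mul_mul_of_mul_eq se₄, mul_mul_of_mul_eq se₅, mul_mul_of_mul_eq se₆,
    mul_mul_of_mul_eq ee₁, mul_mul_of_mul_eq ee₂, mul_mul_of_mul_eq ee₃,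
    mul_mul_of_mul_eq ee₄, mul_mul_of_mul_eq ee₅, mul_mul_of_mul_eq ee₆,
    mul_mul_of_mul_eq ss₁, mul_mul_of_mul_eq ss₂, mul_mul_of_mul_eq ss₃,
    mul_mul_of_mul_eq ss₄, ess, one_mul, mul_assoc, smul_mul_assoc, smul_smul]
  simp only [mul_one]
  match_scalars <;> ring

theorem yangBaxter_brauerRho {κ : K} (hω : ω = 2 * κ + 2) {u v : K} (hu : u ≠ 0) (hv : v ≠ 0)
    (huv : u + v ≠ 0) (hu' : u - κ ≠ 0) (hv' : v - κ ≠ 0) (huv' : u + v - κ ≠ 0) :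
    brauerRho κ s ε i j u * brauerRho κ s ε i k (u + v) * brauerRho κ s ε j k v =
      brauerRho κ s ε j k v * brauerRho κ s ε i k (u + v) * brauerRho κ s ε i j u := by
  simp only [brauerRho_eq_inv_smul_brauerR κ _ _ hu hu',
    brauerRho_eq_inv_smul_brauerR κ _ _ hv hv', brauerRho_eq_inv_smul_brauerR κ _ _ huv huv',
    smul_mul_smul_comm,
    hB.yangBaxter_brauerR hij hjk hik hω]
  congr 1
  ring

end Triple

end BrauerRels

noncomputable def brauerRowProd (κ : K) (s ε : ℕ → ℕ → A) (i : ℕ) (l : List ℕ) : A :=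
  (l.map fun j => brauerRho κ s ε i j ((i : K) - j)).prod

/-- The rows `m, m + 1, …, n - 1` of the product defining `S_n`. -/
noncomputable def brauerTailProd (κ : K) (s ε : ℕ → ℕ → A) (n m : ℕ) : A :=
  ((List.range' m (n - m)).map fun i =>
    brauerRowProd κ s ε i (List.range' (i + 1) (n - (i + 1)))).prod

theorem lexPairs_prod_eq_brauerTailProd (κ : K) (n : ℕ) :
    ((lexPairs n).map fun p => brauerRho κ s ε p.1 p.2 ((p.1 : K) - (p.2 : K))).prod =
      brauerTailProd κ s ε n 0 := by
  simp only [lexPairs, List.filter_lt_range]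
  simp [brauerTailProd, brauerRowProd, List.flatMap_def, Function.comp_def, List.range_eq_range']

@[simp]
theorem brauerRowProd_cons (κ : K) (i j : ℕ) (l : List ℕ) :
    brauerRowProd κ s ε i (j :: l) =
      brauerRho κ s ε i j ((i : K) - j) * brauerRowProd κ s ε i l :=
  List.prod_cons

@[simp]
theorem brauerRowProd_append (κ : K) (i : ℕ) (l₁ l₂ : List ℕ) :
    brauerRowProd κ s ε i (l₁ ++ l₂) = brauerRowProd κ s ε i l₁ * brauerRowProd κ s ε i l₂ := by
  simp [brauerRowProd]

theorem brauerTailProd_eq_mul (κ : K) {n m : ℕ} (h : m < n) :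
    brauerTailProd κ s ε n m =
      brauerRowProd κ s ε m (List.range' (m + 1) (n - (m + 1))) *
        brauerTailProd κ s ε n (m + 1) := by
  rw [brauerTailProd, show n - m = n - (m + 1) + 1 by omega, List.range'_succ]
  rfl

theorem brauerRho_dvd_brauerRowProd (κ : K) {n k : ℕ} (hk : k + 1 < n) :
    brauerRho κ s ε k (k + 1) (-1) ∣
      brauerRowProd κ s ε k (List.range' (k + 1) (n - (k + 1))) := by
  rw [show n - (k + 1) = n - (k + 2) + 1 by omega, List.range'_succ, brauerRowProd_cons,
    Nat.cast_succ, sub_add_cancel_left]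
  exact dvd_mul_right _ _

theorem BrauerRels.commute_brauerRho_brauerRowProd (hB : BrauerRels K A ω s ε) (κ : K)
    {a b i : ℕ} {l : List ℕ} (hia : i ≠ a) (hib : i ≠ b) (hl : ∀ j ∈ l, j ≠ a ∧ j ≠ b)
    (w : K) : Commute (brauerRho κ s ε a b w) (brauerRowProd κ s ε i l) := by
  refine Commute.list_prod_right _ _ fun x hx => ?_
  obtain ⟨j, hj, rfl⟩ := List.mem_map.mp hx
  exact (hB.commute_brauerRho_of_disjoint κ hia hib (hl j hj).1 (hl j hj).2 _ _).symm

/- Yang–Baxter with `u = m - k` and `v = -1`, so that `u + v = m - (k + 1)`. -/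
theorem BrauerRels.brauerRho_dvd_brauerRowProd_mul (hB : BrauerRels K A ω s ε) [CharZero K]
    {κ : K} (hω : ω = 2 * κ + 2) {n : ℕ}
    (hκ : ∀ i j : ℕ, i < n → j < n → i ≠ j → ((i : K) - (j : K)) - κ ≠ 0)
    {m k : ℕ} (hmk : m < k) (hk : k + 1 < n) :
    brauerRho κ s ε k (k + 1) (-1) ∣
      brauerRowProd κ s ε m (List.range' (m + 1) (n - (m + 1))) *
        brauerRho κ s ε k (k + 1) (-1) := by
  have hcast : (m : K) - ((k + 1 : ℕ) : K) = ((m : K) - k) + -1 := by push_cast; ring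
  have hneg : (-1 : K) = (k : K) - ((k + 1 : ℕ) : K) := by push_cast; ring
  have hybe := hB.yangBaxter_brauerRho (i := m) (j := k) (k := k + 1) hmk.ne (by omega)
    (by omega) hω (u := (m : K) - k) (v := -1)
    (sub_ne_zero.mpr (Nat.cast_injective.ne hmk.ne)) (by norm_num)
    (hcast ▸ sub_ne_zero.mpr (Nat.cast_injective.ne (by omega)))
    (hκ m k (by omega) (by omega) hmk.ne) (hneg ▸ hκ k (k + 1) (by omega) hk (by omega))
    (hcast ▸ hκ m (k + 1) (by omega) hk (by omega))
  rw [← hcast] at hybe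
  rw [List.range'_eq_append_cons_cons hmk hk, brauerRowProd_append, brauerRowProd_cons,
    brauerRowProd_cons,
    mul_mul_mul_eq_of_yangBaxter hybe (hB.commute_brauerRho_brauerRowProd κ (by omega)
      (by omega) (fun j hj => by have := List.mem_range'_1.mp hj; omega) _)
      (hB.commute_brauerRho_brauerRowProd κ (by omega) (by omega)
      (fun j hj => by have := List.mem_range'_1.mp hj; omega) _)]
  exact dvd_mul_right _ _

theorem BrauerRels.brauerRho_dvd_brauerTailProd (hB : BrauerRels K A ω s ε) [CharZero K]
    {κ : K} (hω : ω = 2 * κ + 2) {n : ℕ}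
    (hκ : ∀ i j : ℕ, i < n → j < n → i ≠ j → ((i : K) - (j : K)) - κ ≠ 0)
    {m k : ℕ} (hmk : m ≤ k) (hk : k + 1 < n) :
    brauerRho κ s ε k (k + 1) (-1) ∣ brauerTailProd κ s ε n m := by
  induction hmk using Nat.decreasingInduction with
  | self =>
    rw [brauerTailProd_eq_mul κ (by omega)]
    exact (brauerRho_dvd_brauerRowProd κ hk).mul_right _
  | of_succ m hmk ih =>
    obtain ⟨X, hX⟩ := ih
    rw [brauerTailProd_eq_mul κ (by omega), hX, ← mul_assoc]
    exact (hB.brauerRho_dvd_brauerRowProd_mul hω hκ hmk hk).mul_right X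

end Brauer

/-- In the Brauer algebra `B_n(ω)`, the symmetrizer
`S_n = (1/n!) ∏_{1 ≤ i < j ≤ n} ρ_{ij}(i - j)` (lexicographically ordered product) satisfies
`ε_k S_n = 0` and `s_k S_n = S_n` for all `k = 1, …, n-1`. -/
theorem brauer_symmetrizer_props {K : Type*} [Field K] [CharZero K] {A : Type*} [Ring A]
    [Algebra K A] (ω : K) (s ε : ℕ → ℕ → A) (hB : BrauerRels K A ω s ε) (n : ℕ)
    (hgen : ∀ i j : ℕ, i < n → j < n → i ≠ j → ((i : K) - (j : K)) - (ω / 2 - 1) ≠ 0) :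
    ∀ k : ℕ, k + 1 < n →
      ε k (k + 1) * brauerSymmetrizer ω s ε n = 0 ∧
      s k (k + 1) * brauerSymmetrizer ω s ε n = brauerSymmetrizer ω s ε n := by
  intro k hk
  have hω : ω = 2 * (ω / 2 - 1) + 2 := by ring
  have hκ : -1 - (ω / 2 - 1) ≠ 0 := by
    simpa using hgen k (k + 1) (by omega) hk (by omega)
  obtain ⟨X, hX⟩ := hB.brauerRho_dvd_brauerTailProd hω hgen (Nat.zero_le k) hk
  have hS : brauerSymmetrizer ω s ε n =
      (n.factorial : K)⁻¹ • (brauerRho (ω / 2 - 1) s ε k (k + 1) (-1) * X) := by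
    rw [brauerSymmetrizer, lexPairs_prod_eq_brauerTailProd, hX]
  have hkk : k ≠ k + 1 := (Nat.succ_ne_self k).symm
  refine ⟨?_, ?_⟩ <;> rw [hS, mul_smul_comm, ← mul_assoc]
  · rw [hB.e_mul_brauerRho_neg_one hω hκ hkk, zero_mul, smul_zero]
  · rw [hB.s_mul_brauerRho_neg_one _ hkk]
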